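/- arXiv:2201.13387 — 5 statements merged into one kernel-verified Lean document; each statement's English description precedes it below -/
import Mathlib

section
/- Suppose each f_i is convex and L_i-smooth and x* is a global minimizer of F (so ∇F(x*) = 0). Let p be a probability vector with positive entries, x, w ∈ ℝ^d, and g_i = (1/(n p_i))(∇f_i(x) − ∇f_i(w)) + ∇F(w). Then ∑_{i=1}^n p_i ‖g_i − ∇F(x)‖² ≤ 4L̄(F(x) − F(x*)) + 4L̄(F(w) − F(x*)) + V_e(p; x, w) − V_e(p^IS; x, w). -/
open MeasureTheory Finset
open scoped RealInnerProductSpace BigOperators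

abbrev Euc (d : ℕ) := EuclideanSpace ℝ (Fin d)

/-- The finite-sum objective `F(x) = (1/n) ∑ f i x`. -/
noncomputable def avgF {d : ℕ} (n : ℕ) (f : Fin n → Euc d → ℝ) (x : Euc d) : ℝ :=
  (1 / (n : ℝ)) * ∑ i, f i x

/-- The gradient of the finite-sum objective, `∇F(x) = (1/n) ∑ ∇f i x`. -/
noncomputable def avgG {d : ℕ} (n : ℕ) (f' : Fin n → Euc d → Euc d) (x : Euc d) : Euc d :=
  (1 / (n : ℝ)) • ∑ i, f' i x

/-- The effective sampling variance `V_e(q; x, w)`. -/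
noncomputable def Ve {d : ℕ} (n : ℕ) (f' : Fin n → Euc d → Euc d)
    (q : Fin n → ℝ) (x w : Euc d) : ℝ :=
  (1 / (n : ℝ) ^ 2) * ∑ i, (1 / q i) * ‖f' i x - f' i w‖ ^ 2

/-- The average smoothness constant `L̄ = (1/n) ∑ L i`. -/
noncomputable def Lbar (n : ℕ) (L : Fin n → ℝ) : ℝ := (1 / (n : ℝ)) * ∑ i, L i

/-- The importance sampling distribution `p^IS_i = L i / (n L̄)`. -/
noncomputable def pIS (n : ℕ) (L : Fin n → ℝ) (i : Fin n) : ℝ :=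
  L i / ((n : ℝ) * Lbar n L)

/-!
The stochastic gradient is unbiased, so its variance is the second moment `V_e(p; x, w)` minus
`‖∇F(x) - ∇F(w)‖²`, hence at most `V_e(p; x, w)`. It remains to bound `V_e(p^IS; x, w)`: splitting
`∇f_i(x) - ∇f_i(w)` through `∇f_i(x*)` and using co-coercivity of each convex `L_i`-smooth `f_i`,
`‖∇f_i(y) - ∇f_i(x*)‖² ≤ 2 L_i D_i(x*, y)` with `D_i` the Bregman divergence of `f_i`, the weights
`1 / p^IS_i = n L̄ / L_i` cancel the `L_i`, and the average of the `D_i(x*, y)` is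
`F(y) - F(x*)` because `∇F(x*) = 0`.
-/

open InnerProductSpace

theorem sum_mul_norm_inv_smul_sub_sum_sq {ι E : Type*} [Fintype ι] [NormedAddCommGroup E]
    [InnerProductSpace ℝ E] {p : ι → ℝ} (hp : ∀ i, p i ≠ 0) (hp1 : ∑ i, p i = 1) (v : ι → E) :
    ∑ i, p i * ‖(p i)⁻¹ • v i - ∑ j, v j‖ ^ 2 = ∑ i, (p i)⁻¹ * ‖v i‖ ^ 2 - ‖∑ j, v j‖ ^ 2 := by
  set s := ∑ j, v j
  have hterm : ∀ i, p i * ‖(p i)⁻¹ • v i - s‖ ^ 2 =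
      (p i)⁻¹ * ‖v i‖ ^ 2 - 2 * ⟪v i, s⟫ + p i * ‖s‖ ^ 2 := by
    intro i
    have hpi := hp i
    rw [norm_sub_sq_real, norm_smul, real_inner_smul_left, Real.norm_eq_abs, mul_pow, sq_abs]
    field_simp
  simp_rw [hterm]
  rw [sum_add_distrib, sum_sub_distrib, ← mul_sum, ← sum_mul, ← sum_inner, hp1,
    real_inner_self_eq_norm_sq]
  ring

section Smooth

variable {E : Type*} [NormedAddCommGroup E] [InnerProductSpace ℝ E]

def bregman (f : E → ℝ) (f' : E → E) (x y : E) : ℝ := f y - f x - ⟪f' x, y - x⟫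

theorem bregman_eq_bregman_sub_bregman_add_inner (f : E → ℝ) (f' : E → E) (x y z : E) :
    bregman f f' x y = bregman f f' x z - bregman f f' y z + ⟪f' y - f' x, y - z⟫ := by
  simp only [bregman, inner_sub_left, inner_sub_right]
  ring

variable [CompleteSpace E]

theorem IsLocalMin.hasGradientAt_eq_zero {f : E → ℝ} {g x : E} (h : IsLocalMin f x)
    (hg : HasGradientAt f g x) : g = 0 :=
  (toDual ℝ E).map_eq_zero_iff.1 (h.hasFDerivAt_eq_zero (hasGradientAt_iff_hasFDerivAt.1 hg))

theorem HasGradientAt.hasDerivAt_comp_add_smul {f : E → ℝ} {g x v : E} {t : ℝ}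
    (h : HasGradientAt f g (x + t • v)) : HasDerivAt (fun s : ℝ => f (x + s • v)) ⟪g, v⟫ t := by
  have hline : HasDerivAt (fun s : ℝ => x + s • v) v t := by
    simpa using ((hasDerivAt_id t).smul_const v).const_add x
  simpa [Function.comp_def] using h.hasFDerivAt.comp_hasDerivAt t hline

theorem bregman_le_of_lipschitz_gradient {f : E → ℝ} {f' : E → E} {L : ℝ}
    (hgrad : ∀ x, HasGradientAt f (f' x) x) (hsmooth : ∀ x y, ‖f' x - f' y‖ ≤ L * ‖x - y‖)
    (x y : E) : bregman f f' x y ≤ L / 2 * ‖y - x‖ ^ 2 := by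
  set v := y - x
  set φ : ℝ → ℝ := fun t => f (x + t • v) - t * ⟪f' x, v⟫ - L / 2 * t ^ 2 * ‖v‖ ^ 2
  have hφ : ∀ t, HasDerivAt φ (⟪f' (x + t • v) - f' x, v⟫ - L * t * ‖v‖ ^ 2) t := by
    intro t
    have hquad : HasDerivAt (fun s : ℝ => L / 2 * s ^ 2 * ‖v‖ ^ 2) (L * t * ‖v‖ ^ 2) t :=
      (((hasDerivAt_pow 2 t).const_mul (L / 2)).mul_const (‖v‖ ^ 2)).congr_deriv (by ring)
    have hlin : HasDerivAt (fun s : ℝ => s * ⟪f' x, v⟫) ⟪f' x, v⟫ t := by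
      simpa using (hasDerivAt_id t).mul_const ⟪f' x, v⟫
    rw [inner_sub_left]
    exact (((hgrad (x + t • v)).hasDerivAt_comp_add_smul).sub hlin).sub hquad
  have hφ' : ∀ t ∈ interior (Set.Icc (0 : ℝ) 1),
      ⟪f' (x + t • v) - f' x, v⟫ - L * t * ‖v‖ ^ 2 ≤ 0 := by
    intro t ht
    rw [interior_Icc] at ht
    calc ⟪f' (x + t • v) - f' x, v⟫ - L * t * ‖v‖ ^ 2
        ≤ L * ‖t • v‖ * ‖v‖ - L * t * ‖v‖ ^ 2 := by
          gcongr
          calc _ ≤ ‖f' (x + t • v) - f' x‖ * ‖v‖ := real_inner_le_norm _ _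
            _ ≤ L * ‖t • v‖ * ‖v‖ := by
              gcongr
              simpa using hsmooth (x + t • v) x
      _ = 0 := by rw [norm_smul, Real.norm_of_nonneg ht.1.le]; ring
  have hanti : AntitoneOn φ (Set.Icc 0 1) :=
    antitoneOn_of_hasDerivWithinAt_nonpos (convex_Icc 0 1)
      (fun t _ => (hφ t).continuousAt.continuousWithinAt)
      (fun t _ => (hφ t).hasDerivWithinAt) hφ'
  have h01 := hanti (Set.left_mem_Icc.2 zero_le_one) (Set.right_mem_Icc.2 zero_le_one) zero_le_one
  norm_num [φ, v] at h01
  simp only [bregman]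
  linarith

theorem norm_sub_sq_le_two_mul_bregman {f : E → ℝ} {f' : E → E} {L : ℝ} (hL : 0 < L)
    (hgrad : ∀ x, HasGradientAt f (f' x) x) (hconv : ∀ x y, f x + ⟪f' x, y - x⟫ ≤ f y)
    (hsmooth : ∀ x y, ‖f' x - f' y‖ ≤ L * ‖x - y‖) (x y : E) :
    ‖f' y - f' x‖ ^ 2 ≤ 2 * L * bregman f f' x y := by
  set u := f' y - f' x
  -- the point reached from `y` by a gradient step of length `1 / L` for `z ↦ f z - ⟪f' x, z⟫`
  set z := y - L⁻¹ • u
  have hxz : 0 ≤ bregman f f' x z := by simp only [bregman]; linarith [hconv x z]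
  have hyz := bregman_le_of_lipschitz_gradient hgrad hsmooth y z
  have hzy : z - y = -(L⁻¹ • u) := by simp [z]
  have hyz' : y - z = L⁻¹ • u := by simp [z]
  rw [hzy, norm_neg, norm_smul, Real.norm_of_nonneg (inv_nonneg.2 hL.le)] at hyz
  rw [bregman_eq_bregman_sub_bregman_add_inner f f' x y z, hyz', real_inner_smul_right,
    real_inner_self_eq_norm_sq]
  have hu : L⁻¹ * ‖u‖ ^ 2 - L / 2 * (L⁻¹ * ‖u‖) ^ 2 = ‖u‖ ^ 2 / (2 * L) := by
    field_simp
    ring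
  have key : ‖u‖ ^ 2 / (2 * L) ≤ bregman f f' x z - bregman f f' y z + L⁻¹ * ‖u‖ ^ 2 := by
    linarith
  rwa [div_le_iff₀ (by positivity), mul_comm] at key

end Smooth

theorem avgF_hasGradientAt {d n : ℕ} {f : Fin n → Euc d → ℝ} {f' : Fin n → Euc d → Euc d}
    (hgrad : ∀ i x, HasGradientAt (f i) (f' i x) x) (x : Euc d) :
    HasGradientAt (avgF n f) (avgG n f' x) x := by
  rw [hasGradientAt_iff_hasFDerivAt, avgG, map_smul, map_sum]
  exact (HasFDerivAt.fun_sum fun i _ => (hgrad i x).hasFDerivAt).const_mul (1 / (n : ℝ))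

theorem bregman_avgF {d n : ℕ} (f : Fin n → Euc d → ℝ) (f' : Fin n → Euc d → Euc d)
    (x y : Euc d) :
    bregman (avgF n f) (avgG n f') x y = 1 / (n : ℝ) * ∑ i, bregman (f i) (f' i) x y := by
  simp only [bregman, avgF, avgG, real_inner_smul_left, sum_inner, sum_sub_distrib]
  ring

theorem Ve_pIS_le {d n : ℕ} {f : Fin n → Euc d → ℝ} {f' : Fin n → Euc d → Euc d}
    {L : Fin n → ℝ} (hgrad : ∀ i x, HasGradientAt (f i) (f' i x) x)
    (hconv : ∀ i x y, f i x + ⟪f' i x, y - x⟫ ≤ f i y) (hLpos : ∀ i, 0 < L i)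
    (hsmooth : ∀ i x y, ‖f' i x - f' i y‖ ≤ L i * ‖x - y‖) (xstar x w : Euc d) :
    Ve n f' (pIS n L) x w ≤ 4 * Lbar n L *
      (bregman (avgF n f) (avgG n f') xstar x + bregman (avgF n f) (avgG n f') xstar w) := by
  set B : Fin n → Euc d → ℝ := fun i y => bregman (f i) (f' i) xstar y
  have hLbar : 0 ≤ Lbar n L := by
    unfold Lbar
    exact mul_nonneg (by positivity) (sum_nonneg fun i _ => (hLpos i).le)
  have hterm : ∀ i,
      1 / pIS n L i * ‖f' i x - f' i w‖ ^ 2 ≤ n * Lbar n L * (4 * (B i x + B i w)) := by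
    intro i
    have hcoco := norm_sub_sq_le_two_mul_bregman (hLpos i) (hgrad i) (hconv i) (hsmooth i) xstar
    have hsplit : ‖f' i x - f' i w‖ ^ 2 ≤
        2 * ‖f' i x - f' i xstar‖ ^ 2 + 2 * ‖f' i w - f' i xstar‖ ^ 2 := by
      have := parallelogram_law_with_norm ℝ (f' i x - f' i xstar) (f' i w - f' i xstar)
      rw [sub_sub_sub_cancel_right] at this
      linarith [sq_nonneg ‖f' i x - f' i xstar + (f' i w - f' i xstar)‖]
    calc 1 / pIS n L i * ‖f' i x - f' i w‖ ^ 2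
        ≤ n * Lbar n L / L i * (4 * L i * (B i x + B i w)) := by
          rw [pIS, one_div_div]
          have := div_nonneg (mul_nonneg n.cast_nonneg hLbar) (hLpos i).le
          gcongr
          linarith [hcoco x, hcoco w]
      _ = n * Lbar n L * (4 * (B i x + B i w)) := by
          field_simp [(hLpos i).ne']
  calc Ve n f' (pIS n L) x w
      ≤ 1 / (n : ℝ) ^ 2 * ∑ i, n * Lbar n L * (4 * (B i x + B i w)) := by
        unfold Ve
        exact mul_le_mul_of_nonneg_left (sum_le_sum fun i _ => hterm i) (by positivity)
    _ = 4 * Lbar n L * (1 / (n : ℝ) * ∑ i, B i x + 1 / (n : ℝ) * ∑ i, B i w) := by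
        rw [← mul_sum, ← mul_sum, sum_add_distrib]
        rcases eq_or_ne (n : ℝ) 0 with hn | hn
        · simp [hn]
        · field_simp
    _ = _ := by rw [bregman_avgF, bregman_avgF]

theorem as_lsvrg_variance_bound_general (d n : ℕ)
    (f : Fin n → Euc d → ℝ) (f' : Fin n → Euc d → Euc d) (L : Fin n → ℝ)
    (hgrad : ∀ i x, HasGradientAt (f i) (f' i x) x)
    (hconv : ∀ i x y, f i x + ⟪f' i x, y - x⟫ ≤ f i y)
    (hLpos : ∀ i, 0 < L i)
    (hsmooth : ∀ i x y, ‖f' i x - f' i y‖ ≤ L i * ‖x - y‖)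
    (xstar : Euc d) (hmin : ∀ y, avgF n f xstar ≤ avgF n f y)
    (p : Fin n → ℝ) (hp : ∀ i, 0 < p i) (hp1 : ∑ i, p i = 1)
    (x w : Euc d)
    (g : Fin n → Euc d)
    (hg : ∀ i, g i = (1 / ((n : ℝ) * p i)) • (f' i x - f' i w) + avgG n f' w) :
    ∑ i, p i * ‖g i - avgG n f' x‖ ^ 2 ≤
      4 * Lbar n L * (avgF n f x - avgF n f xstar) +
      4 * Lbar n L * (avgF n f w - avgF n f xstar) +
      Ve n f' p x w - Ve n f' (pIS n L) x w := by
  set v : Fin n → Euc d := fun i => (1 / (n : ℝ)) • (f' i x - f' i w)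
  have hv : ∑ i, v i = avgG n f' x - avgG n f' w := by
    simp only [v, avgG, ← smul_sum, sum_sub_distrib, smul_sub]
  have hgv : ∀ i, g i - avgG n f' x = (p i)⁻¹ • v i - ∑ j, v j := by
    intro i
    rw [hv, hg i, smul_smul, show (p i)⁻¹ * (1 / (n : ℝ)) = 1 / (n * p i) by ring]
    abel
  have hVe : Ve n f' p x w = ∑ i, (p i)⁻¹ * ‖v i‖ ^ 2 := by
    simp only [Ve, v, mul_sum, norm_smul, mul_pow, Real.norm_eq_abs, sq_abs, one_div]
    exact sum_congr rfl fun i _ => by ring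
  have hvar : ∑ i, p i * ‖g i - avgG n f' x‖ ^ 2 ≤ Ve n f' p x w := by
    simp_rw [hgv]
    rw [sum_mul_norm_inv_smul_sub_sum_sq (fun i => (hp i).ne') hp1, hVe]
    exact sub_le_self _ (sq_nonneg _)
  have hloc : IsLocalMin (avgF n f) xstar := Filter.Eventually.of_forall hmin
  have hstat : avgG n f' xstar = 0 := hloc.hasGradientAt_eq_zero (avgF_hasGradientAt hgrad xstar)
  have hIS := Ve_pIS_le hgrad hconv hLpos hsmooth xstar x w
  simp only [bregman, hstat, inner_zero_left, sub_zero] at hIS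
  linarith

/-- variance bound for the AS-LSVRG stochastic gradient. -/
theorem as_lsvrg_variance_bound (d n : ℕ) (hd : 0 < d) (hn : 0 < n)
    (f : Fin n → Euc d → ℝ) (f' : Fin n → Euc d → Euc d) (L : Fin n → ℝ)
    (hgrad : ∀ i x, HasGradientAt (f i) (f' i x) x)
    (hconv : ∀ i x y, f i x + ⟪f' i x, y - x⟫ ≤ f i y)
    (hLpos : ∀ i, 0 < L i)
    (hsmooth : ∀ i x y, ‖f' i x - f' i y‖ ≤ L i * ‖x - y‖)
    (xstar : Euc d) (hmin : ∀ y, avgF n f xstar ≤ avgF n f y)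
    (p : Fin n → ℝ) (hp : ∀ i, 0 < p i) (hp1 : ∑ i, p i = 1)
    (x w : Euc d)
    (g : Fin n → Euc d)
    (hg : ∀ i, g i = (1 / ((n : ℝ) * p i)) • (f' i x - f' i w) + avgG n f' w) :
    ∑ i, p i * ‖g i - avgG n f' x‖ ^ 2 ≤
      4 * Lbar n L * (avgF n f x - avgF n f xstar) +
      4 * Lbar n L * (avgF n f w - avgF n f xstar) +
      Ve n f' p x w - Ve n f' (pIS n L) x w :=
  as_lsvrg_variance_bound_general d n f f' L hgrad hconv hLpos hsmooth xstar hmin p hp hp1 x w g hg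
end

section
/- Let L̄ > 0, η > 0, μ ≥ 0 and κ = μ/L̄. For any vectors x, z, g, x* ∈ ℝ^d, define z' = (1/(1 + ηκ))(ηκ·x + z − (η/L̄)g). Then ⟨g, x* − z'⟩ + (μ/2)‖x − x*‖² ≥ (L̄/(2η))‖z − z'‖² + (L̄(1 + ηκ)/(2η))‖z' − x*‖² − (L̄/(2η))‖z − x*‖². -/
open scoped RealInnerProductSpace BigOperators

/-! The update is equivalent to `g = (Lb/η)(z - z') + μ(x - z')`, the first-order optimality
condition of the proximal step defining `z'`. Pairing this with `xstar - z'` and expanding both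
inner products by the three-point identity leaves exactly the slack `(μ/2)‖x - z'‖² ≥ 0`. -/

section InnerProductSpace

variable {E : Type*} [NormedAddCommGroup E] [InnerProductSpace ℝ E]

theorem two_mul_inner_sub_sub_eq (a b c : E) :
    2 * ⟪a - b, c - b⟫ = ‖a - b‖ ^ 2 + ‖b - c‖ ^ 2 - ‖a - c‖ ^ 2 := by
  have h := norm_sub_sq_real (a - b) (c - b)
  rw [sub_sub_sub_cancel_right, norm_sub_rev c b] at h
  linarith

theorem three_point_le_of_eq_smul_add_smul {a μ : ℝ} (hμ : 0 ≤ μ) {x z g z' y : E}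
    (hg : g = a • (z - z') + μ • (x - z')) :
    (a / 2) * ‖z - z'‖ ^ 2 + ((a + μ) / 2) * ‖z' - y‖ ^ 2 - (a / 2) * ‖z - y‖ ^ 2 ≤
      ⟪g, y - z'⟫ + (μ / 2) * ‖x - y‖ ^ 2 := by
  have hz := two_mul_inner_sub_sub_eq z z' y
  have hx := two_mul_inner_sub_sub_eq x z' y
  have hslack : 0 ≤ μ / 2 * ‖x - z'‖ ^ 2 := by positivity
  rw [hg, inner_add_left, real_inner_smul_left, real_inner_smul_left]
  linear_combination (-a / 2) * hz - (μ / 2) * hx + hslack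

end InnerProductSpace

theorem eq_smul_sub_add_smul_sub_of_eq_smul {E : Type*} [AddCommGroup E] [Module ℝ E]
    {L η κ : ℝ} (hL : L ≠ 0) (hη : η ≠ 0) (hκ : 1 + η * κ ≠ 0) {x z g z' : E}
    (hz' : z' = (1 / (1 + η * κ)) • (η • κ • x + z - (η / L) • g)) :
    g = (L / η) • (z - z') + (L * κ) • (x - z') := by
  have h : (1 + η * κ) • z' = η • κ • x + z - (η / L) • g := by
    rw [hz', smul_smul, mul_one_div_cancel hκ, one_smul]
  linear_combination (norm := skip) (L / η) • h
  match_scalars <;> field_simp <;> ring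

theorem katyusha_z_update_ineq_general (d : ℕ)
    (Lb η μ κ : ℝ) (hLb : 0 < Lb) (hη : 0 < η) (hμ : 0 ≤ μ) (hκ : κ = μ / Lb)
    (x z g xstar : Euc d)
    (z' : Euc d)
    (hz' : z' = (1 / (1 + η * κ)) • (η • κ • x + z - (η / Lb) • g)) :
    ⟪g, xstar - z'⟫ + (μ / 2) * ‖x - xstar‖ ^ 2 ≥
      (Lb / (2 * η)) * ‖z - z'‖ ^ 2 +
      (Lb * (1 + η * κ) / (2 * η)) * ‖z' - xstar‖ ^ 2 -
      (Lb / (2 * η)) * ‖z - xstar‖ ^ 2 := by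
  have hLbκ : Lb * κ = μ := by rw [hκ]; field_simp
  have hg := eq_smul_sub_add_smul_sub_of_eq_smul hLb.ne' hη.ne'
    (by rw [hκ]; positivity) hz'
  rw [hLbκ] at hg
  have key := three_point_le_of_eq_smul_add_smul (y := xstar) hμ hg
  have hcoef : Lb * (1 + η * κ) / (2 * η) = (Lb / η + μ) / 2 := by
    rw [← hLbκ]; field_simp
  rwa [hcoef, div_mul_eq_div_div_swap]

/-- the three-point inequality for the L-Katyusha `z`-update. -/
theorem katyusha_z_update_ineq (d : ℕ) (hd : 0 < d)
    (Lb η μ κ : ℝ) (hLb : 0 < Lb) (hη : 0 < η) (hμ : 0 ≤ μ) (hκ : κ = μ / Lb)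
    (x z g xstar : Euc d)
    (z' : Euc d)
    (hz' : z' = (1 / (1 + η * κ)) • (η • κ • x + z - (η / Lb) • g)) :
    ⟪g, xstar - z'⟫ + (μ / 2) * ‖x - xstar‖ ^ 2 ≥
      (Lb / (2 * η)) * ‖z - z'‖ ^ 2 +
      (Lb * (1 + η * κ) / (2 * η)) * ‖z' - xstar‖ ^ 2 -
      (Lb / (2 * η)) * ‖z - xstar‖ ^ 2 :=
  katyusha_z_update_ineq_general d Lb η μ κ hLb hη hμ hκ x z g xstar z' hz'
end

section
/- Let F : ℝ^d → ℝ be convex, differentiable and L̄-smooth (‖∇F(x) − ∇F(y)‖ ≤ L̄‖x − y‖, with L̄ > 0). Let η > 0 and θ₁ > 0 with ηθ₁ < 1, let x, z, z', g ∈ ℝ^d and set v' = x + θ₁(z' − z). Then (L̄/(2η))‖z' − z‖² + ⟨g, z' − z⟩ ≥ (1/θ₁)(F(v') − F(x)) − (η/(2L̄(1 − ηθ₁)))‖g − ∇F(x)‖². -/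
open scoped RealInnerProductSpace BigOperators

/-! By the descent lemma for the `L̄`-smooth `F`, the step `v' - x = θ₁ (z' - z)` gives
`(F v' - F x) / θ₁ ≤ ⟪∇F x, z' - z⟫ + (L̄ θ₁ / 2) ‖z' - z‖²`. Young's inequality with weight
`η / (2 L̄ (1 - η θ₁))` then trades `⟪∇F x - g, z' - z⟫` for `‖g - ∇F x‖²` plus
`L̄ (1 - η θ₁) / (2 η) ‖z' - z‖²`, exactly the rest of the budget `L̄ / (2 η) ‖z' - z‖²`. -/

section InnerProductSpace

variable {E : Type*} [NormedAddCommGroup E] [InnerProductSpace ℝ E]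

theorem real_inner_le_mul_norm_sq_add {c : ℝ} (hc : 0 < c) (u w : E) :
    ⟪u, w⟫ ≤ c * ‖u‖ ^ 2 + 1 / (4 * c) * ‖w‖ ^ 2 := by
  have hexpand := norm_sub_sq_real ((2 * c) • u) w
  rw [real_inner_smul_left, norm_smul, Real.norm_of_nonneg (by positivity)] at hexpand
  have hsq : 0 ≤ ‖(2 * c) • u - w‖ ^ 2 := sq_nonneg _
  have hc' : 1 / (4 * c) * (4 * c) = 1 := by field_simp
  nlinarith

theorem le_add_inner_add_sq_of_lipschitz_gradient [CompleteSpace E] {F : E → ℝ} {F' : E → E}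
    {L : ℝ} (hgrad : ∀ x, HasGradientAt F (F' x) x)
    (hsmooth : ∀ x y, ‖F' x - F' y‖ ≤ L * ‖x - y‖) (a b : E) :
    F b ≤ F a + ⟪F' a, b - a⟫ + L / 2 * ‖b - a‖ ^ 2 := by
  set h := b - a
  have hline (t : ℝ) : HasDerivAt (fun t : ℝ => F (a + t • h)) ⟪F' (a + t • h), h⟫ t := by
    have hpath : HasDerivAt (fun t : ℝ => a + t • h) h t := by
      simpa using ((hasDerivAt_id t).smul_const h).const_add a
    have := (hgrad (a + t • h)).hasFDerivAt.comp_hasDerivAt t hpath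
    simp only [Function.comp_def, InnerProductSpace.toDual_apply_apply] at this
    exact this
  have hquad (t : ℝ) : HasDerivAt (fun t : ℝ => F a + t * ⟪F' a, h⟫ + L / 2 * ‖h‖ ^ 2 * t ^ 2)
      (⟪F' a, h⟫ + L * ‖h‖ ^ 2 * t) t := by
    have hpow : HasDerivAt (fun t : ℝ => t ^ 2) (2 * t) t := by simpa using hasDerivAt_pow 2 t
    have hsum : HasDerivAt (fun t : ℝ => F a + t * ⟪F' a, h⟫ + L / 2 * ‖h‖ ^ 2 * t ^ 2)
        (1 * ⟪F' a, h⟫ + L / 2 * ‖h‖ ^ 2 * (2 * t)) t :=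
      (((hasDerivAt_id' t).mul_const _).const_add _).add (hpow.const_mul _)
    exact hsum.congr_deriv (by ring)
  have hslope {t : ℝ} (ht : 0 ≤ t) : ⟪F' (a + t • h), h⟫ ≤ ⟪F' a, h⟫ + L * ‖h‖ ^ 2 * t := by
    have := calc ⟪F' (a + t • h) - F' a, h⟫ ≤ ‖F' (a + t • h) - F' a‖ * ‖h‖ :=
          real_inner_le_norm _ _
      _ ≤ L * ‖(a + t • h) - a‖ * ‖h‖ := by gcongr; exact hsmooth _ _
      _ = L * ‖h‖ ^ 2 * t := by
        rw [add_sub_cancel_left, norm_smul, Real.norm_of_nonneg ht]; ring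
    rwa [inner_sub_left, sub_le_iff_le_add'] at this
  have hmain := image_le_of_deriv_right_le_deriv_boundary
    (fun t _ => (hline t).continuousAt.continuousWithinAt)
    (fun t _ => (hline t).hasDerivWithinAt) (by simp)
    (fun t _ => (hquad t).continuousAt.continuousWithinAt)
    (fun t _ => (hquad t).hasDerivWithinAt) (fun t ht => hslope ht.1)
    (Set.right_mem_Icc.2 zero_le_one)
  simpa [h] using hmain

end InnerProductSpace

theorem katyusha_progress_ineq_general (d : ℕ)
    (F : Euc d → ℝ) (F' : Euc d → Euc d) (Lb : ℝ) (hLb : 0 < Lb)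
    (hgrad : ∀ x, HasGradientAt F (F' x) x)
    (hsmooth : ∀ x y, ‖F' x - F' y‖ ≤ Lb * ‖x - y‖)
    (η θ₁ : ℝ) (hη : 0 < η) (hθ₁ : 0 < θ₁) (hηθ : η * θ₁ < 1)
    (x z z' g : Euc d) (v' : Euc d) (hv' : v' = x + θ₁ • (z' - z)) :
    (Lb / (2 * η)) * ‖z' - z‖ ^ 2 + ⟪g, z' - z⟫ ≥
      (1 / θ₁) * (F v' - F x) -
      (η / (2 * Lb * (1 - η * θ₁))) * ‖g - F' x‖ ^ 2 := by
  set w := z' - z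
  have hdescent : (1 / θ₁) * (F v' - F x) ≤ ⟪F' x, w⟫ + Lb * θ₁ / 2 * ‖w‖ ^ 2 := by
    have := le_add_inner_add_sq_of_lipschitz_gradient hgrad hsmooth x v'
    rw [hv', add_sub_cancel_left, real_inner_smul_right, norm_smul, Real.norm_of_nonneg hθ₁.le,
      ← hv'] at this
    rw [one_div_mul_eq_div, div_le_iff₀ hθ₁]
    linarith
  set c := η / (2 * Lb * (1 - η * θ₁))
  have hc : 0 < c := by have : 0 < 1 - η * θ₁ := sub_pos.2 hηθ; positivity
  have hyoung := real_inner_le_mul_norm_sq_add hc (F' x - g) w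
  rw [inner_sub_left, norm_sub_rev] at hyoung
  have hcoef : 1 / (4 * c) + Lb * θ₁ / 2 = Lb / (2 * η) := by
    have : 1 - η * θ₁ ≠ 0 := (sub_pos.2 hηθ).ne'
    simp only [c]; field_simp; ring
  linear_combination hdescent + hyoung + ‖w‖ ^ 2 * hcoef

/-- inequality relating the `z`-update progress to function values. -/
theorem katyusha_progress_ineq (d : ℕ) (hd : 0 < d)
    (F : Euc d → ℝ) (F' : Euc d → Euc d) (Lb : ℝ) (hLb : 0 < Lb)
    (hgrad : ∀ x, HasGradientAt F (F' x) x)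
    (hconv : ConvexOn ℝ Set.univ F)
    (hsmooth : ∀ x y, ‖F' x - F' y‖ ≤ Lb * ‖x - y‖)
    (η θ₁ : ℝ) (hη : 0 < η) (hθ₁ : 0 < θ₁) (hηθ : η * θ₁ < 1)
    (x z z' g : Euc d) (v' : Euc d) (hv' : v' = x + θ₁ • (z' - z)) :
    (Lb / (2 * η)) * ‖z' - z‖ ^ 2 + ⟪g, z' - z⟫ ≥
      (1 / θ₁) * (F v' - F x) -
      (η / (2 * Lb * (1 - η * θ₁))) * ‖g - F' x‖ ^ 2 :=
  katyusha_progress_ineq_general d F F' Lb hLb hgrad hsmooth η θ₁ hη hθ₁ hηθ x z z' g v' hv'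
end

section
/- Let x, w ∈ ℝ^d be such that ∇f_i(x) ≠ ∇f_i(w) for every i = 1,…,n, and define p*_i = ‖∇f_i(x) − ∇f_i(w)‖ / ∑_{j=1}^n ‖∇f_j(x) − ∇f_j(w)‖. Then p* is a probability vector with positive entries, V_e(p*; x, w) = ((1/n)∑_{i=1}^n ‖∇f_i(x) − ∇f_i(w)‖)², and for every probability vector q with positive entries, V_e(p*; x, w) ≤ V_e(q; x, w). -/
open MeasureTheory Finset
open scoped RealInnerProductSpace BigOperators

/-! By Cauchy–Schwarz (in Sedrakyan's form), `(∑ aᵢ)² ≤ (∑ qᵢ) · ∑ aᵢ² / qᵢ` for every positive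
`q`, with equality when `q` is proportional to `a`; applied to `aᵢ = ‖∇fᵢ(x) − ∇fᵢ(w)‖`. -/

namespace Finset

variable {ι K : Type*} [Field K]

theorem sum_one_div_div_sum_mul_sq (s : Finset ι) (a : ι → K) :
    ∑ i ∈ s, 1 / (a i / ∑ j ∈ s, a j) * a i ^ 2 = (∑ i ∈ s, a i) ^ 2 := by
  have hterm : ∀ i ∈ s, 1 / (a i / ∑ j ∈ s, a j) * a i ^ 2 = (∑ j ∈ s, a j) * a i := by
    intro i _
    rcases eq_or_ne (a i) 0 with hai | hai
    · simp [hai]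
    · field_simp
  rw [sum_congr rfl hterm, ← mul_sum, sq]

theorem sq_sum_le_sum_one_div_mul_sq [LinearOrder K] [IsStrictOrderedRing K] (s : Finset ι)
    (a : ι → K) {q : ι → K} (hq : ∀ i ∈ s, 0 < q i) (hq1 : ∑ i ∈ s, q i = 1) :
    (∑ i ∈ s, a i) ^ 2 ≤ ∑ i ∈ s, 1 / q i * a i ^ 2 := by
  simpa [hq1, div_eq_inv_mul] using sq_sum_div_le_sum_sq_div s a hq

end Finset

theorem optimal_sampling_distribution_general (d n : ℕ) (hn : 0 < n)
    (f' : Fin n → Euc d → Euc d)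
    (x w : Euc d) (hne : ∀ i, f' i x ≠ f' i w)
    (pstar : Fin n → ℝ)
    (hpstar : ∀ i, pstar i = ‖f' i x - f' i w‖ / ∑ j, ‖f' j x - f' j w‖) :
    (∀ i, 0 < pstar i) ∧ (∑ i, pstar i = 1) ∧
    Ve n f' pstar x w = ((1 / (n : ℝ)) * ∑ i, ‖f' i x - f' i w‖) ^ 2 ∧
    ∀ q : Fin n → ℝ, (∀ i, 0 < q i) → (∑ i, q i = 1) →
      Ve n f' pstar x w ≤ Ve n f' q x w := by
  have ha : ∀ i, 0 < ‖f' i x - f' i w‖ := fun i => norm_pos_iff.mpr (sub_ne_zero.mpr (hne i))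
  have hS : 0 < ∑ j, ‖f' j x - f' j w‖ :=
    sum_pos (fun i _ => ha i) (univ_nonempty_iff.mpr ⟨⟨0, hn⟩⟩)
  have hVe : Ve n f' pstar x w = ((1 / (n : ℝ)) * ∑ i, ‖f' i x - f' i w‖) ^ 2 := by
    rw [Ve, funext hpstar, sum_one_div_div_sum_mul_sq]
    ring
  refine ⟨fun i => hpstar i ▸ div_pos (ha i) hS, ?_, hVe, ?_⟩
  · rw [funext hpstar, ← sum_div, div_self hS.ne']
  · intro q hq hq1
    rw [hVe, Ve, mul_pow, one_div_pow]
    gcongr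
    exact sq_sum_le_sum_one_div_mul_sq _ _ (fun i _ => hq i) hq1

/-- the oracle optimal dynamic sampling distribution and its optimality. -/
theorem optimal_sampling_distribution (d n : ℕ) (hd : 0 < d) (hn : 0 < n)
    (f : Fin n → Euc d → ℝ) (f' : Fin n → Euc d → Euc d)
    (hgrad : ∀ i x, HasGradientAt (f i) (f' i x) x)
    (x w : Euc d) (hne : ∀ i, f' i x ≠ f' i w)
    (pstar : Fin n → ℝ)
    (hpstar : ∀ i, pstar i = ‖f' i x - f' i w‖ / ∑ j, ‖f' j x - f' j w‖) :
    (∀ i, 0 < pstar i) ∧ (∑ i, pstar i = 1) ∧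
    Ve n f' pstar x w = ((1 / (n : ℝ)) * ∑ i, ‖f' i x - f' i w‖) ^ 2 ∧
    ∀ q : Fin n → ℝ, (∀ i, 0 < q i) → (∑ i, q i = 1) →
      Ve n f' pstar x w ≤ Ve n f' q x w :=
  optimal_sampling_distribution_general d n hn f' x w hne pstar hpstar
end

section
/- Suppose F is differentiable and μ-strongly convex with μ > 0. Let p be a probability vector with positive entries, x, w, x* ∈ ℝ^d, η > 0, and g_i = (1/(n p_i))(∇f_i(x) − ∇f_i(w)) + ∇F(w). Then ∑_{i=1}^n p_i ‖x − ηg_i − x*‖² ≤ (1 − ημ)‖x − x*‖² − 2η(F(x) − F(x*)) + η² ∑_{i=1}^n p_i ‖g_i‖². -/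
open MeasureTheory Finset
open scoped RealInnerProductSpace BigOperators

/-- `D(w) = (1/n) ∑ (1 / L i) ‖∇f i w - ∇f i x*‖²`. -/
noncomputable def Dfun {d : ℕ} (n : ℕ) (f' : Fin n → Euc d → Euc d) (L : Fin n → ℝ)
    (xstar w : Euc d) : ℝ :=
  (1 / (n : ℝ)) * ∑ i, (1 / L i) * ‖f' i w - f' i xstar‖ ^ 2

/-!
Expanding the square gives `‖x - x*‖² - 2η⟪∑ pᵢ gᵢ, x - x*⟫ + η² ∑ pᵢ ‖gᵢ‖²`. The importance
weights `1/(n pᵢ)` cancel against `pᵢ`, so `∑ pᵢ gᵢ = ∇F(x)`, and strong convexity between `x` and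
`x*` bounds `⟪∇F(x), x - x*⟫` from below by `F(x) - F(x*) + (μ/2)‖x - x*‖²`.
-/

section WeightedSums

variable {ι E : Type*} [Fintype ι] [NormedAddCommGroup E] [InnerProductSpace ℝ E]

theorem sum_mul_norm_sub_smul_sq {p : ι → ℝ} (hp1 : ∑ i, p i = 1) (a : E) (η : ℝ) (g : ι → E) :
    ∑ i, p i * ‖a - η • g i‖ ^ 2 =
      ‖a‖ ^ 2 - 2 * η * ⟪∑ i, p i • g i, a⟫ + η ^ 2 * ∑ i, p i * ‖g i‖ ^ 2 := by
  have expand : ∀ i, p i * ‖a - η • g i‖ ^ 2 =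
      p i * ‖a‖ ^ 2 - 2 * η * ⟪p i • g i, a⟫ + η ^ 2 * (p i * ‖g i‖ ^ 2) := fun i => by
    rw [norm_sub_sq_real, real_inner_smul_left, real_inner_smul_right, real_inner_comm,
      norm_smul, mul_pow, Real.norm_eq_abs, sq_abs]
    ring
  simp only [expand, sum_add_distrib, sum_sub_distrib, ← sum_mul, ← mul_sum, ← sum_inner, hp1,
    one_mul]

theorem sum_smul_importance_weighted {p : ι → ℝ} (hp : ∀ i, p i ≠ 0) (hp1 : ∑ i, p i = 1)
    (N : ℝ) (v : ι → E) (c : E) :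
    ∑ i, p i • ((1 / (N * p i)) • v i + c) = (1 / N) • ∑ i, v i + c := by
  have weight : ∀ i, p i * (1 / (N * p i)) = 1 / N := fun i => by
    rw [mul_one_div, mul_comm N, ← div_div, div_self (hp i)]
  simp only [smul_add, smul_smul, weight, sum_add_distrib, ← sum_smul, hp1, one_smul, ← smul_sum]

end WeightedSums

theorem StrongConvexity.sub_add_le_inner {E : Type*} [NormedAddCommGroup E]
    [InnerProductSpace ℝ E] {F : E → ℝ} {G x y : E} {μ : ℝ}
    (hsc : F x + ⟪G, y - x⟫ + (μ / 2) * ‖y - x‖ ^ 2 ≤ F y) :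
    F x - F y + (μ / 2) * ‖x - y‖ ^ 2 ≤ ⟪G, x - y⟫ := by
  rw [← neg_sub x y, inner_neg_right, norm_neg] at hsc
  linarith

theorem strong_convexity_descent_step_general (d n : ℕ)
    (f : Fin n → Euc d → ℝ) (f' : Fin n → Euc d → Euc d)
    (μ : ℝ)
    (hsc : ∀ x y : Euc d,
      avgF n f x + ⟪avgG n f' x, y - x⟫ + (μ / 2) * ‖y - x‖ ^ 2 ≤ avgF n f y)
    (p : Fin n → ℝ) (hp : ∀ i, 0 < p i) (hp1 : ∑ i, p i = 1)
    (x w xstar : Euc d) (η : ℝ) (hη : 0 < η)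
    (g : Fin n → Euc d)
    (hg : ∀ i, g i = (1 / ((n : ℝ) * p i)) • (f' i x - f' i w) + avgG n f' w) :
    ∑ i, p i * ‖x - η • g i - xstar‖ ^ 2 ≤
      (1 - η * μ) * ‖x - xstar‖ ^ 2 -
      2 * η * (avgF n f x - avgF n f xstar) +
      η ^ 2 * ∑ i, p i * ‖g i‖ ^ 2 := by
  have unbiased : ∑ i, p i • g i = avgG n f' x := by
    simp only [hg]
    rw [sum_smul_importance_weighted (fun i => (hp i).ne') hp1]
    simp only [avgG, sum_sub_distrib, smul_sub, sub_add_cancel]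
  have descent := mul_le_mul_of_nonneg_left
    (StrongConvexity.sub_add_le_inner (hsc x xstar)) (by positivity : 0 ≤ 2 * η)
  simp only [sub_right_comm x, sum_mul_norm_sub_smul_sq hp1, unbiased]
  linarith

/-- one-step descent inequality under strong convexity. -/
theorem strong_convexity_descent_step (d n : ℕ) (hd : 0 < d) (hn : 0 < n)
    (f : Fin n → Euc d → ℝ) (f' : Fin n → Euc d → Euc d)
    (hgrad : ∀ i x, HasGradientAt (f i) (f' i x) x)
    (μ : ℝ) (hμ : 0 < μ)
    (hsc : ∀ x y : Euc d,
      avgF n f x + ⟪avgG n f' x, y - x⟫ + (μ / 2) * ‖y - x‖ ^ 2 ≤ avgF n f y)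
    (p : Fin n → ℝ) (hp : ∀ i, 0 < p i) (hp1 : ∑ i, p i = 1)
    (x w xstar : Euc d) (η : ℝ) (hη : 0 < η)
    (g : Fin n → Euc d)
    (hg : ∀ i, g i = (1 / ((n : ℝ) * p i)) • (f' i x - f' i w) + avgG n f' w) :
    ∑ i, p i * ‖x - η • g i - xstar‖ ^ 2 ≤
      (1 - η * μ) * ‖x - xstar‖ ^ 2 -
      2 * η * (avgF n f x - avgF n f xstar) +
      η ^ 2 * ∑ i, p i * ‖g i‖ ^ 2 :=
  strong_convexity_descent_step_general d n f f' μ hsc p hp hp1 x w xstar η hη g hg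
end
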